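/- arXiv:1810.09335 — 3 statements merged into one kernel-verified Lean document; each statement's English description precedes it below -/
import Mathlib

section
/- In a pre-ordered residuated system, if k is a supremal element for a subset Z, then a·k is a supremal element for the set aZ = {a·z : z ∈ Z}. -/
/-! Multiplication by `a` is monotone and has `a → ·` as upper adjoint. Monotonicity makes
`a·k` an upper bound of `aZ`; for an upper bound `w` of `aZ`, adjointness makes `a → w` an
upper bound of `Z`, so `k ≼ a → w` and hence `a·k ≼ w`. -/

section ResiduatedSystem

variable {A : Type*}

def IsSupremal (le : A → A → Prop) (Z : Set A) (k : A) : Prop :=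
  (∀ z ∈ Z, le z k) ∧ ∀ w : A, w ≠ k → (∀ z ∈ Z, le z w) → le k w

variable {le : A → A → Prop}

theorem IsSupremal.le_of_forall_le (hrefl : ∀ x : A, le x x) {Z : Set A} {k w : A}
    (hk : IsSupremal le Z k) (hw : ∀ z ∈ Z, le z w) : le k w := by
  by_cases hwk : w = k
  · exact hwk ▸ hrefl k
  · exact hk.2 w hwk hw

variable [CommMonoid A] {arr : A → A → A}

theorem le_mul_arr_iff (hres : ∀ x y z : A, le (x * y) z ↔ le x (arr y z)) (a x w : A) :
    le (a * x) w ↔ le x (arr a w) := by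
  rw [mul_comm]
  exact hres x a w

theorem mul_le_mul_left_of_le (hrefl : ∀ x : A, le x x)
    (htrans : ∀ x y z : A, le x y → le y z → le x z)
    (hres : ∀ x y z : A, le (x * y) z ↔ le x (arr y z)) {z k : A} (hzk : le z k) (a : A) :
    le (a * z) (a * k) :=
  (le_mul_arr_iff hres a z _).mpr <|
    htrans _ _ _ hzk ((le_mul_arr_iff hres a k _).mp (hrefl _))

theorem IsSupremal.image_mul_left (hrefl : ∀ x : A, le x x)
    (htrans : ∀ x y z : A, le x y → le y z → le x z)
    (hres : ∀ x y z : A, le (x * y) z ↔ le x (arr y z)) {Z : Set A} {k : A}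
    (hk : IsSupremal le Z k) (a : A) :
    IsSupremal le ((fun z => a * z) '' Z) (a * k) := by
  refine ⟨?_, fun w _ hw => ?_⟩
  · rintro _ ⟨z, hz, rfl⟩
    exact mul_le_mul_left_of_le hrefl htrans hres (hk.1 z hz) a
  · have hZ : ∀ z ∈ Z, le z (arr a w) := fun z hz =>
      (le_mul_arr_iff hres a z w).mp (hw _ ⟨z, hz, rfl⟩)
    exact (le_mul_arr_iff hres a k w).mpr (hk.le_of_forall_le hrefl hZ)

end ResiduatedSystem

theorem stmt_16_general {A : Type*} [CommMonoid A] (le : A → A → Prop) (arr : A → A → A)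
    (hrefl : ∀ x : A, le x x)
    (htrans : ∀ x y z : A, le x y → le y z → le x z)
    (hres : ∀ x y z : A, le (x * y) z ↔ le x (arr y z)) :

    ∀ (Z : Set A) (k a : A),
      ((∀ z ∈ Z, le z k) ∧ ∀ w : A, w ≠ k → (∀ z ∈ Z, le z w) → le k w) →
      ((∀ u ∈ (fun z => a * z) '' Z, le u (a * k)) ∧
        ∀ w : A, w ≠ a * k → (∀ u ∈ (fun z => a * z) '' Z, le u w) → le (a * k) w) :=
  fun _ _ a hk => IsSupremal.image_mul_left hrefl htrans hres hk a

theorem stmt_16 {A : Type*} [CommMonoid A] (le : A → A → Prop) (arr : A → A → A)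
    (hrefl : ∀ x : A, le x x)
    (htrans : ∀ x y z : A, le x y → le y z → le x z)
    (hle1 : ∀ x : A, le x 1)
    (hres : ∀ x y z : A, le (x * y) z ↔ le x (arr y z)) :

    ∀ (Z : Set A) (k a : A),
      ((∀ z ∈ Z, le z k) ∧ ∀ w : A, w ≠ k → (∀ z ∈ Z, le z w) → le k w) →
      ((∀ u ∈ (fun z => a * z) '' Z, le u (a * k)) ∧
        ∀ w : A, w ≠ a * k → (∀ u ∈ (fun z => a * z) '' Z, le u w) → le (a * k) w) :=
  stmt_16_general le arr hrefl htrans hres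
end

section
/- In a residuated quasi-directoid, the induced relation x ≼ y iff x ⊔ y = y is a pre-order, and the induced relational system ⟨A, ·, →, 1, ≼⟩ is a pre-ordered residuated system. -/
theorem stmt_17_general {A : Type*} [CommMonoid A] (arr : A → A → A) (j : A → A → A)
    (h1 : ∀ x : A, j x x = x)
    (h4 : ∀ x y z : A, j x (j (j x y) z) = j (j x y) z)
    (h5 : ∀ x : A, j x 1 = 1)
    (h6 : ∀ x y z : A, j (x * y) z = z ↔ j x (arr y z) = arr y z)
    (le : A → A → Prop) (hle : ∀ x y : A, le x y ↔ j x y = y) :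
    (∀ x : A, le x x) ∧
    (∀ x y z : A, le x y → le y z → le x z) ∧
    (∀ x : A, le x 1) ∧
    (∀ x y z : A, le (x * y) z ↔ le x (arr y z)) := by
  simp only [hle]
  refine ⟨h1, fun x y z hxy hyz => ?_, h5, h6⟩
  simpa only [hxy, hyz] using h4 x y z

theorem stmt_17 {A : Type*} [CommMonoid A] (arr : A → A → A) (j : A → A → A)
    (h1 : ∀ x : A, j x x = x)
    (h2 : ∀ x y : A, j x (j x y) = j x y)
    (h3 : ∀ x y : A, j y (j x y) = j x y)
    (h4 : ∀ x y z : A, j x (j (j x y) z) = j (j x y) z)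
    (h5 : ∀ x : A, j x 1 = 1)
    (h6 : ∀ x y z : A, j (x * y) z = z ↔ j x (arr y z) = arr y z)
    (le : A → A → Prop) (hle : ∀ x y : A, le x y ↔ j x y = y) :
    (∀ x : A, le x x) ∧
    (∀ x y z : A, le x y → le y z → le x z) ∧
    (∀ x : A, le x 1) ∧
    (∀ x y z : A, le (x * y) z ↔ le x (arr y z)) :=
  stmt_17_general arr j h1 h4 h5 h6 le hle
end

section
/- In a pre-ordered residuated system with 0 satisfying the law of double negation x'' = x (where x' = x → 0), it holds that x → y ≼ (x·y')' and (x·y')' ≼ x → y, and also y' → x' ≼ x → y, for all x, y. -/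
/-!
The first inequality holds in any pre-ordered residuated commutative monoid, with any element in
place of 0: `(x → y)·x·(y → z) ≼ y·(y → z) ≼ z`. For the other two, double negation rewrites
`x → y` as `x → ((y → 0) → 0)`, and they become instances of currying
`(x·u) → z ≼ x → (u → z)` and of exchange `u → (x → z) ≼ x → (u → z)` with `u = y'`.
-/

structure IsResiduatedPreorder {A : Type*} [CommMonoid A] (le : A → A → Prop) (arr : A → A → A) :
    Prop where
  refl : ∀ x, le x x
  trans : ∀ x y z, le x y → le y z → le x z
  residuated : ∀ x y z, le (x * y) z ↔ le x (arr y z)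

namespace IsResiduatedPreorder

variable {A : Type*} [CommMonoid A] {le : A → A → Prop} {arr : A → A → A}

theorem arr_mul_le (h : IsResiduatedPreorder le arr) (x y : A) : le (arr x y * x) y :=
  (h.residuated _ _ _).mpr (h.refl _)

theorem mul_le_mul_right (h : IsResiduatedPreorder le arr) {a b : A} (c : A) (hab : le a b) :
    le (a * c) (b * c) :=
  (h.residuated _ _ _).mpr (h.trans _ _ _ hab ((h.residuated _ _ _).mp (h.refl _)))

theorem le_arr_mul_arr (h : IsResiduatedPreorder le arr) (x y z : A) :
    le (arr x y) (arr (x * arr y z) z) := by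
  rw [← h.residuated, ← mul_assoc]
  exact h.trans _ _ _ (h.mul_le_mul_right _ (h.arr_mul_le x y)) (mul_comm y _ ▸ h.arr_mul_le y z)

theorem arr_mul_le_arr_arr (h : IsResiduatedPreorder le arr) (x y z : A) :
    le (arr (x * y) z) (arr x (arr y z)) := by
  rw [← h.residuated, ← h.residuated, mul_assoc]
  exact h.arr_mul_le _ _

theorem arr_arr_le_arr_arr (h : IsResiduatedPreorder le arr) (x y z : A) :
    le (arr y (arr x z)) (arr x (arr y z)) := by
  rw [← h.residuated, ← h.residuated, mul_right_comm]
  exact h.trans _ _ _ (h.mul_le_mul_right _ (h.arr_mul_le y _)) (h.arr_mul_le x z)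

end IsResiduatedPreorder

theorem stmt_19_general {A : Type*} [CommMonoid A] (le : A → A → Prop) (arr : A → A → A)
    (z0 : A)
    (hrefl : ∀ x : A, le x x)
    (htrans : ∀ x y z : A, le x y → le y z → le x z)
    (hres : ∀ x y z : A, le (x * y) z ↔ le x (arr y z))
    (hdn : ∀ x : A, arr (arr x z0) z0 = x) :
    ∀ x y : A,
      le (arr x y) (arr (x * arr y z0) z0) ∧
      le (arr (x * arr y z0) z0) (arr x y) ∧
      le (arr (arr y z0) (arr x z0)) (arr x y) := by
  intro x y
  have h : IsResiduatedPreorder le arr := ⟨hrefl, htrans, hres⟩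
  refine ⟨h.le_arr_mul_arr x y z0, ?_, ?_⟩
  · simpa only [hdn] using h.arr_mul_le_arr_arr x (arr y z0) z0
  · simpa only [hdn] using h.arr_arr_le_arr_arr x (arr y z0) z0

theorem stmt_19 {A : Type*} [CommMonoid A] (le : A → A → Prop) (arr : A → A → A)
    (z0 : A)
    (hrefl : ∀ x : A, le x x)
    (htrans : ∀ x y z : A, le x y → le y z → le x z)
    (hle1 : ∀ x : A, le x 1)
    (hres : ∀ x y z : A, le (x * y) z ↔ le x (arr y z))
    (hz : ∀ x : A, z0 * x = z0 ∧ x * z0 = z0)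
    (hdn : ∀ x : A, arr (arr x z0) z0 = x) :
    ∀ x y : A,
      le (arr x y) (arr (x * arr y z0) z0) ∧
      le (arr (x * arr y z0) z0) (arr x y) ∧
      le (arr (arr y z0) (arr x z0)) (arr x y) :=
  stmt_19_general le arr z0 hrefl htrans hres hdn
end
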